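/- Let N ≥ 1 be an integer, p > 2 and γ ∈ (0,1). Define, for x ∈ ℝ^N and t > -1, u(x,t) = [ ((p-2)/(p-1)) γ^{1/(p-1)} ( γ(t+1) + x_N - 2 )₊ ]^{(p-1)/(p-2)} + [ ((p-2)/(p-1)) γ^{1/(p-1)} ( γ(t+1) - x_N - 2 )₊ ]^{(p-1)/(p-2)}. Then for every t with 0 < t < 2/γ - 1: (i) u(x,t) = 0 if and only if |x_N| ≤ 2 - γ(t+1), so u vanishes exactly on the cone {(x,t) : 0 < t < 2/γ - 1, -(2-γ(t+1)) ≤ x_N ≤ 2 - γ(t+1)}; (ii) u is a classical solution of the parabolic p-Laplace equation at every point of the open set {(x,t) : 0 < t < 2/γ - 1, |x_N| > 2 - γ(t+1)}. -/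

import Mathlib

open Real Filter

noncomputable section

/-- Divergence (in the space variables) of a vector field on Euclidean space. -/
noncomputable def sdiv {N : ℕ} (F : EuclideanSpace ℝ (Fin N) → EuclideanSpace ℝ (Fin N))
    (x : EuclideanSpace ℝ (Fin N)) : ℝ :=
  ∑ i, fderiv ℝ F x (EuclideanSpace.single i 1) i

/-- The p-Laplace flux field `|Df|^{p-2} Df` of a function of the space variable. -/
noncomputable def pField {N : ℕ} (p : ℝ) (f : EuclideanSpace ℝ (Fin N) → ℝ)
    (x : EuclideanSpace ℝ (Fin N)) : EuclideanSpace ℝ (Fin N) :=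
  ‖gradient f x‖ ^ (p - 2) • gradient f x

/-- `u` is a classical solution of the parabolic p-Laplace equation
`∂ₜ u = div (|Du|^{p-2} Du)` on `U`: at every point of `U`, `u` is differentiable in `t`,
twice differentiable in `x` (the flux field being differentiable as well, so that its
spatial divergence is meaningful), and the equation holds pointwise. -/
def IsPSolOn {N : ℕ} (p : ℝ) (u : EuclideanSpace ℝ (Fin N) → ℝ → ℝ)
    (U : Set (EuclideanSpace ℝ (Fin N) × ℝ)) : Prop :=
  ∀ q ∈ U,
    DifferentiableAt ℝ (u q.1) q.2 ∧
    DifferentiableAt ℝ (fun y => u y q.2) q.1 ∧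
    DifferentiableAt ℝ (gradient (fun y => u y q.2)) q.1 ∧
    DifferentiableAt ℝ (pField p (fun y => u y q.2)) q.1 ∧
    deriv (u q.1) q.2 = sdiv (pField p (fun y => u y q.2)) q.1

/-- `u` is a classical super-solution of the parabolic p-Laplace equation on `U`:
at every point of `U`, `u` is differentiable in `t`, twice differentiable in `x`
(the flux field being differentiable as well), and
`∂ₜ u - div (|Du|^{p-2} Du) ≥ 0` holds pointwise. -/
def IsPSupersolOn {N : ℕ} (p : ℝ) (u : EuclideanSpace ℝ (Fin N) → ℝ → ℝ)
    (U : Set (EuclideanSpace ℝ (Fin N) × ℝ)) : Prop :=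
  ∀ q ∈ U,
    DifferentiableAt ℝ (u q.1) q.2 ∧
    DifferentiableAt ℝ (fun y => u y q.2) q.1 ∧
    DifferentiableAt ℝ (gradient (fun y => u y q.2)) q.1 ∧
    DifferentiableAt ℝ (pField p (fun y => u y q.2)) q.1 ∧
    0 ≤ deriv (u q.1) q.2 - sdiv (pField p (fun y => u y q.2)) q.1


lemma hasGradientAt_comp_proj {N : ℕ} (i : Fin N) (φ : ℝ → ℝ) (d : ℝ)
    (x : EuclideanSpace ℝ (Fin N)) (hφ : HasDerivAt φ d (x i)) :
    HasGradientAt (fun y : EuclideanSpace ℝ (Fin N) => φ (y i))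
      (d • EuclideanSpace.single i (1:ℝ)) x := by
  rw [hasGradientAt_iff_hasFDerivAt]
  have h1 : HasFDerivAt (fun y : EuclideanSpace ℝ (Fin N) => φ (y i))
      ((ContinuousLinearMap.smulRight (1 : ℝ →L[ℝ] ℝ) d).comp
        (EuclideanSpace.proj i : EuclideanSpace ℝ (Fin N) →L[ℝ] ℝ)) x :=
    hφ.hasFDerivAt.comp x (((EuclideanSpace.proj i : EuclideanSpace ℝ (Fin N) →L[ℝ] ℝ)).hasFDerivAt :
      HasFDerivAt (fun y : EuclideanSpace ℝ (Fin N) => y i) _ x)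
  refine h1.congr_fderiv ?_.symm
  ext w
  simp [InnerProductSpace.toDual_apply_apply, real_inner_smul_left,
    EuclideanSpace.inner_single_left]
  ring

lemma field_hasFDerivAt {N : ℕ} (i : Fin N) (ψ : ℝ → ℝ) (d : ℝ)
    (x : EuclideanSpace ℝ (Fin N)) (hψ : HasDerivAt ψ d (x i)) :
    HasFDerivAt (fun y : EuclideanSpace ℝ (Fin N) =>
        ψ (y i) • EuclideanSpace.single i (1:ℝ))
      ((ContinuousLinearMap.toSpanSingleton ℝ (EuclideanSpace.single i (1:ℝ))).comp
        ((ContinuousLinearMap.smulRight (1 : ℝ →L[ℝ] ℝ) d).comp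
          (EuclideanSpace.proj i : EuclideanSpace ℝ (Fin N) →L[ℝ] ℝ))) x := by
  have h1 : HasFDerivAt (fun y : EuclideanSpace ℝ (Fin N) => ψ (y i))
      ((ContinuousLinearMap.smulRight (1 : ℝ →L[ℝ] ℝ) d).comp
        (EuclideanSpace.proj i : EuclideanSpace ℝ (Fin N) →L[ℝ] ℝ)) x :=
    hψ.hasFDerivAt.comp x (((EuclideanSpace.proj i : EuclideanSpace ℝ (Fin N) →L[ℝ] ℝ)).hasFDerivAt :
      HasFDerivAt (fun y : EuclideanSpace ℝ (Fin N) => y i) _ x)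
  exact (ContinuousLinearMap.toSpanSingleton ℝ
    (EuclideanSpace.single i (1:ℝ))).hasFDerivAt.comp x h1

lemma sdiv_field {N : ℕ} (i : Fin N) (ψ : ℝ → ℝ) (d : ℝ)
    (x : EuclideanSpace ℝ (Fin N)) (hψ : HasDerivAt ψ d (x i)) :
    sdiv (fun y : EuclideanSpace ℝ (Fin N) =>
        ψ (y i) • EuclideanSpace.single i (1:ℝ)) x = d := by
  have h := field_hasFDerivAt i ψ d x hψ
  rw [sdiv]
  simp only [h.fderiv]
  simp [ContinuousLinearMap.toSpanSingleton_apply, EuclideanSpace.single_apply]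
  rw [Finset.sum_eq_single i (by intro j _ hj; simp [Ne.symm hj]) (by simp)]
  simp

lemma contProj {N : ℕ} (i : Fin N) : Continuous (fun y : EuclideanSpace ℝ (Fin N) => y i) :=
  (EuclideanSpace.proj i : EuclideanSpace ℝ (Fin N) →L[ℝ] ℝ).continuous

lemma model_key {N : ℕ} (p q c b ε : ℝ) (i : Fin N) (hp : 2 < p)
    (hq : q = (p-1)/(p-2)) (hc : 0 < c) (hε : ε = 1 ∨ ε = -1)
    (x : EuclideanSpace ℝ (Fin N)) (hx : 0 < b + ε * x i)
    (f : EuclideanSpace ℝ (Fin N) → ℝ)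
    (hf : f =ᶠ[nhds x] fun y => c * (b + ε * y i) ^ q) :
    DifferentiableAt ℝ f x ∧
    DifferentiableAt ℝ (gradient f) x ∧
    DifferentiableAt ℝ (pField p f) x ∧
    sdiv (pField p f) x = (c*q)^(p-1) * q * (b + ε * x i)^(q-1) := by
  have hp2 : (0:ℝ) < p - 2 := by linarith
  have hp1 : (0:ℝ) < p - 1 := by linarith
  have hq0 : 0 < q := by rw [hq]; positivity
  have hε2 : ε * ε = 1 := by rcases hε with h | h <;> rw [h] <;> ring
  have hεabs : |ε| = 1 := by rcases hε with h | h <;> rw [h] <;> simp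
  have hcq : 0 < c * q := by positivity
  have hscont : Continuous (fun y : EuclideanSpace ℝ (Fin N) => b + ε * y i) :=
    continuous_const.add (continuous_const.mul (contProj i))
  have h1 : ∀ᶠ y in nhds x, 0 < b + ε * y i :=
    (continuousAt_const (y := (0:ℝ))).eventually_lt hscont.continuousAt hx
  have h2 : ∀ᶠ y in nhds x,
      (f =ᶠ[nhds y] fun z => c * (b + ε * z i) ^ q) ∧ 0 < b + ε * y i :=
    (eventually_eventually_nhds.2 hf).and h1
  have hinner : ∀ r : ℝ, HasDerivAt (fun r' : ℝ => b + ε * r') ε r := by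
    intro r
    simpa using ((hasDerivAt_id r).const_mul ε).const_add b
  -- gradient of the model
  have hgrad : ∀ y : EuclideanSpace ℝ (Fin N), 0 < b + ε * y i →
      HasGradientAt (fun z : EuclideanSpace ℝ (Fin N) => c * (b + ε * z i) ^ q)
        ((c * (ε * q * (b + ε * y i)^(q-1))) • EuclideanSpace.single i (1:ℝ)) y := by
    intro y hy
    exact hasGradientAt_comp_proj i (fun r => c * (b + ε * r) ^ q) _ y
      (((hinner (y i)).rpow_const (Or.inl (ne_of_gt hy))).const_mul c)
  have hgradf : gradient f =ᶠ[nhds x]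
      (fun y => (c * (ε * q * (b + ε * y i)^(q-1))) • EuclideanSpace.single i (1:ℝ)) := by
    filter_upwards [h2] with y ⟨hy1, hy2⟩
    rw [hy1.gradient_eq, (hgrad y hy2).gradient]
  -- scalar computation
  have hm1 : ((q-1)*(p-1)) = q := by rw [hq]; field_simp; ring
  have hscalar : ∀ sv : ℝ, 0 < sv →
      (c * q * sv^(q-1))^(p-2) * (c * (ε * q * sv^(q-1))) =
        (c*q)^(p-1) * sv^((q-1)*(p-1)) * ε := by
    intro sv hsv
    have ht : (0:ℝ) < sv^(q-1) := Real.rpow_pos_of_pos hsv _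
    rw [Real.mul_rpow hcq.le ht.le, ← Real.rpow_mul hsv.le,
      show (p-1) = (p-2) + 1 by ring, Real.rpow_add hcq, Real.rpow_one,
      show (q-1)*((p-2)+1) = (q-1)*(p-2) + (q-1) by ring, Real.rpow_add hsv]
    ring
  -- flux field eventually equal to a model vector field
  have hpf : pField p f =ᶠ[nhds x]
      (fun y : EuclideanSpace ℝ (Fin N) =>
        ((c*q)^(p-1) * (b + ε * (y i))^((q-1)*(p-1)) * ε) •
          EuclideanSpace.single i (1:ℝ)) := by
    filter_upwards [h2, hgradf] with y ⟨hy1, hy2⟩ hy3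
    have hnormG : ‖(c * (ε * q * (b + ε * y i)^(q-1))) •
        EuclideanSpace.single i (1:ℝ)‖ = c * q * (b + ε * y i)^(q-1) := by
      rw [norm_smul, EuclideanSpace.norm_single, norm_one, mul_one, Real.norm_eq_abs,
        abs_mul, abs_mul, abs_mul, hεabs,
        abs_of_pos hc, abs_of_pos hq0, abs_of_pos (Real.rpow_pos_of_pos hy2 _)]
      ring
    rw [pField, hy3, hnormG, smul_smul, hscalar _ hy2]
  -- derivative of the flux scalar at x
  have hΨd : HasDerivAt (fun r : ℝ => (c*q)^(p-1) * (b + ε * r)^((q-1)*(p-1)) * ε)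
      (((c*q)^(p-1) * (ε * ((q-1)*(p-1)) * (b + ε * x i)^((q-1)*(p-1) - 1))) * ε) (x i) :=
    (((hinner (x i)).rpow_const (Or.inl (ne_of_gt hx))).const_mul
      ((c*q)^(p-1))).mul_const ε
  refine ⟨?_, ?_, ?_, ?_⟩
  · exact (hf.differentiableAt_iff).2 (hgrad x hx).differentiableAt
  · refine (hgradf.differentiableAt_iff).2 ?_
    have hd2 : HasDerivAt (fun r : ℝ => c * (ε * q * (b + ε * r)^(q-1)))
        (c * (ε * q * (ε * (q-1) * (b + ε * x i)^(q-1-1)))) (x i) :=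
      ((((hinner (x i)).rpow_const (Or.inl (ne_of_gt hx))).const_mul
        (ε * q)).const_mul c)
    exact (field_hasFDerivAt i _ _ x hd2).differentiableAt
  · exact (hpf.differentiableAt_iff).2 (field_hasFDerivAt i _ _ x hΨd).differentiableAt
  · have heq : sdiv (pField p f) x = sdiv
        (fun y : EuclideanSpace ℝ (Fin N) =>
          ((c*q)^(p-1) * (b + ε * (y i))^((q-1)*(p-1)) * ε) •
            EuclideanSpace.single i (1:ℝ)) x := by
      rw [sdiv, sdiv, hpf.fderiv_eq]
    rw [heq, sdiv_field i _ _ x hΨd, hm1]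
    have h3 : (q:ℝ) - 1 = q - 1 := rfl
    linear_combination ((c*q)^(p-1) * q * (b + ε * x i)^(q-1)) * hε2

theorem stmt3 (N : ℕ) (hN : 1 ≤ N) (p γ : ℝ) (hp : 2 < p) (hγ0 : 0 < γ) (hγ1 : γ < 1) :
    let iN : Fin N := ⟨N - 1, by omega⟩
    let u : EuclideanSpace ℝ (Fin N) → ℝ → ℝ := fun x t =>
      (((p - 2) / (p - 1)) * γ ^ (1 / (p - 1)) *
        max (γ * (t + 1) + x iN - 2) 0) ^ ((p - 1) / (p - 2)) +
      (((p - 2) / (p - 1)) * γ ^ (1 / (p - 1)) *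
        max (γ * (t + 1) - x iN - 2) 0) ^ ((p - 1) / (p - 2))
    -- (i) for 0 < t < 2/γ - 1, `u(x,t) = 0` exactly when `|x_N| ≤ 2 - γ(t+1)`
    (∀ t : ℝ, 0 < t → t < 2 / γ - 1 → ∀ x : EuclideanSpace ℝ (Fin N),
      (u x t = 0 ↔ |x iN| ≤ 2 - γ * (t + 1))) ∧
    -- (ii) `u` is a classical solution on the open set `{|x_N| > 2 - γ(t+1)}`
    IsPSolOn p u {q | 0 < q.2 ∧ q.2 < 2 / γ - 1 ∧ 2 - γ * (q.2 + 1) < |q.1 iN|} := by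
  intro iN u
  have hp2 : (0:ℝ) < p - 2 := by linarith
  have hp1 : (0:ℝ) < p - 1 := by linarith
  set c : ℝ := ((p - 2) / (p - 1)) * γ ^ (1 / (p - 1)) with hc_def
  set q : ℝ := (p - 1) / (p - 2) with hq_def
  have hc : 0 < c := by
    rw [hc_def]; positivity
  have hq0 : 0 < q := by rw [hq_def]; positivity
  set A : ℝ := c ^ q with hA_def
  have hA : 0 < A := Real.rpow_pos_of_pos hc q
  constructor
  · -- part (i)
    intro t ht1 ht2 x
    have key : ∀ a : ℝ, ((c * max a 0) ^ q = 0 ↔ a ≤ 0) := by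
      intro a
      rw [Real.rpow_eq_zero (by positivity) hq0.ne']
      constructor
      · intro h
        rcases mul_eq_zero.1 h with h | h
        · exact absurd h hc.ne'
        · rcases max_eq_right_iff.1 h with h'
          exact h'
      · intro h
        rw [max_eq_right h, mul_zero]
    have h1 : (0:ℝ) ≤ (c * max (γ * (t + 1) + x iN - 2) 0) ^ q := by positivity
    have h2 : (0:ℝ) ≤ (c * max (γ * (t + 1) - x iN - 2) 0) ^ q := by positivity
    show ((c * max (γ * (t + 1) + x iN - 2) 0) ^ q +
          (c * max (γ * (t + 1) - x iN - 2) 0) ^ q = 0 ↔ _)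
    rw [add_eq_zero_iff_of_nonneg h1 h2, key, key, abs_le]
    constructor
    · rintro ⟨ha, hb⟩; constructor <;> linarith
    · rintro ⟨ha, hb⟩; constructor <;> linarith
  · -- part (ii)
    rintro ⟨x, t⟩ ⟨ht1, ht2, hx⟩
    simp only at ht1 ht2 hx ⊢
    have hγt : γ * (t + 1) < 2 := by
      have h := (lt_div_iff₀ hγ0).mp (show t + 1 < 2 / γ by linarith)
      linarith
    -- choose the sign
    obtain ⟨ε, hε, hεx⟩ : ∃ ε : ℝ, (ε = 1 ∨ ε = -1) ∧ ε * x iN = |x iN| := by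
      rcases abs_cases (x iN) with ⟨h1, h2⟩ | ⟨h1, h2⟩
      · exact ⟨1, Or.inl rfl, by rw [one_mul, h1]⟩
      · exact ⟨-1, Or.inr rfl, by rw [h1]; ring⟩
    set b : ℝ := γ * (t + 1) - 2 with hb_def
    have hactive : 0 < b + ε * x iN := by
      show 0 < γ * (t + 1) - 2 + ε * x iN; rw [hεx]; linarith
    have hpassive : b + (-ε) * x iN < 0 := by
      have h0 : 0 ≤ |x iN| := abs_nonneg _
      show γ * (t + 1) - 2 + -ε * x iN < 0
      rw [show -ε * x iN = -(ε * x iN) by ring, hεx]; linarith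
    -- pointwise value lemma
    have hval : ∀ w z : ℝ, 0 < (w - 2) + ε * z → (w - 2) + (-ε) * z < 0 →
        (c * max (w + z - 2) 0) ^ q + (c * max (w - z - 2) 0) ^ q
          = A * ((w - 2) + ε * z) ^ q := by
      intro w z h1 h2
      rcases hε with h | h <;> subst h
      · rw [show w + z - 2 = (w - 2) + 1 * z by ring,
          max_eq_left (by linarith : (0:ℝ) ≤ (w - 2) + 1 * z),
          show w - z - 2 = (w - 2) + (-1) * z by ring,
          max_eq_right (by linarith : (w - 2) + (-1) * z ≤ 0), mul_zero,
          Real.zero_rpow hq0.ne', add_zero, Real.mul_rpow hc.le (by linarith), hA_def]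
      · rw [show w - z - 2 = (w - 2) + (-1) * z by ring,
          max_eq_left (by linarith : (0:ℝ) ≤ (w - 2) + (-1) * z),
          show w + z - 2 = (w - 2) + (-(-1)) * z by ring,
          max_eq_right (by linarith : (w - 2) + (-(-1)) * z ≤ 0), mul_zero,
          Real.zero_rpow hq0.ne', zero_add, Real.mul_rpow hc.le (by linarith), hA_def]
    -- spatial eventual equality
    have hev_active : ∀ᶠ y in nhds x, 0 < b + ε * y iN := by
      have hscont : Continuous (fun y : EuclideanSpace ℝ (Fin N) => b + ε * y iN) :=
        continuous_const.add (continuous_const.mul (contProj iN))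
      exact (continuousAt_const (y := (0:ℝ))).eventually_lt hscont.continuousAt hactive
    have hev_passive : ∀ᶠ y in nhds x, b + (-ε) * y iN < 0 := by
      have hscont : Continuous (fun y : EuclideanSpace ℝ (Fin N) => b + (-ε) * y iN) :=
        continuous_const.add (continuous_const.mul (contProj iN))
      exact hscont.continuousAt.eventually_lt continuousAt_const hpassive
    have hspace : (fun y => u y t) =ᶠ[nhds x]
        (fun y => A * (b + ε * y iN) ^ q) := by
      filter_upwards [hev_active, hev_passive] with y h1 h2
      exact hval (γ * (t + 1)) (y iN) (by exact h1) (by exact h2)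
    have hmk := model_key p q A b ε iN hp hq_def hA hε x hactive _ hspace
    -- time derivative
    have htime : u x =ᶠ[nhds t]
        (fun t' => A * ((γ * (t' + 1) - 2) + ε * x iN) ^ q) := by
      have c1 : Continuous (fun t' : ℝ => (γ * (t' + 1) - 2) + ε * x iN) :=
        ((continuous_const.mul (continuous_id.add continuous_const)).sub
          continuous_const).add continuous_const
      have c2 : Continuous (fun t' : ℝ => (γ * (t' + 1) - 2) + (-ε) * x iN) :=
        ((continuous_const.mul (continuous_id.add continuous_const)).sub
          continuous_const).add continuous_const
      have e1 : ∀ᶠ t' in nhds t, 0 < (γ * (t' + 1) - 2) + ε * x iN := by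
        exact (continuousAt_const (y := (0:ℝ))).eventually_lt c1.continuousAt hactive
      have e2 : ∀ᶠ t' in nhds t, (γ * (t' + 1) - 2) + (-ε) * x iN < 0 := by
        exact c2.continuousAt.eventually_lt continuousAt_const hpassive
      filter_upwards [e1, e2] with t' h1 h2
      exact hval (γ * (t' + 1)) (x iN) h1 h2
    have hd_inner : HasDerivAt (fun t' : ℝ => (γ * (t' + 1) - 2) + ε * x iN) γ t := by
      have : HasDerivAt (fun t' : ℝ => γ * (t' + 1)) γ t := by
        simpa using ((hasDerivAt_id t).add_const 1).const_mul γ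
      simpa using (this.sub_const 2).add_const (ε * x iN)
    have hd_t : HasDerivAt (fun t' : ℝ => A * ((γ * (t' + 1) - 2) + ε * x iN) ^ q)
        (A * (γ * q * ((γ * (t + 1) - 2) + ε * x iN) ^ (q - 1))) t :=
      (hd_inner.rpow_const (Or.inl (by exact hactive.ne'))).const_mul A
    have hd_u : HasDerivAt (u x)
        (A * (γ * q * ((γ * (t + 1) - 2) + ε * x iN) ^ (q - 1))) t :=
      hd_t.congr_of_eventuallyEq htime
    -- the key algebraic identity
    have hcq : c * q = γ ^ (1 / (p - 1)) := by
      rw [hc_def, hq_def]; field_simp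
    have hAq : (A * q) ^ (p - 1) = A * γ := by
      have h1 : (A * q) ^ (p - 1) = A ^ (p - 1) * q ^ (p - 1) :=
        Real.mul_rpow hA.le hq0.le
      have h2 : A ^ (p - 1) = c ^ (q * (p - 1)) := by
        rw [hA_def, ← Real.rpow_mul hc.le]
      have h3 : q * (p - 1) = q + (p - 1) := by
        rw [hq_def]; field_simp; ring
      have h4 : c ^ (q + (p - 1)) = A * c ^ (p - 1) := by
        rw [Real.rpow_add hc, hA_def]
      have h5 : c ^ (p - 1) * q ^ (p - 1) = (c * q) ^ (p - 1) :=
        (Real.mul_rpow hc.le hq0.le).symm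
      have h6 : (γ ^ (1 / (p - 1))) ^ (p - 1) = γ := by
        rw [← Real.rpow_mul hγ0.le, one_div, inv_mul_cancel₀ hp1.ne', Real.rpow_one]
      rw [h1, h2, h3, h4, mul_assoc, h5, hcq, h6]
    refine ⟨hd_u.differentiableAt, hmk.1, hmk.2.1, hmk.2.2.1, ?_⟩
    rw [hd_u.deriv, hmk.2.2.2, hAq]
    show A * (γ * q * (γ * (t + 1) - 2 + ε * x iN) ^ (q - 1)) =
      A * γ * q * (γ * (t + 1) - 2 + ε * x iN) ^ (q - 1)
    ring
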